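/- arXiv:1412.5201 — 5 statements merged into one kernel-verified Lean document; each statement's English description precedes it below -/
import Mathlib

section
/- Let A be a finite alphabet and ω a bi-infinite periodic word over A with least period n (modeled as a function ω : ℤ → A with ω(i+n) = ω(i) for all i, and n minimal positive with this property). Then the set S of all words of length at most n+1 over A that do not occur as factors of ω is a forbidding system defining ω: every bi-infinite word over A avoiding all words of S equals ω up to a shift. -/
/-!
A word avoiding every non-factor of `ω` of length at most `n + 1` has each of its windows of
length `n + 1` occurring in `ω`. Such a window contains both positions `t` and `t + n`, which
carry equal letters in `ω`, so the word is itself `n`-periodic. Two `n`-periodic words agreeing on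
`n` consecutive positions are equal, and the window at `0` aligns the word with a shift of `ω`.
-/

def IsFactorL {A : Type*} (ω : ℤ → A) (u : List A) : Prop :=
  ∃ i : ℤ, ∀ j : Fin u.length, ω (i + j.1) = u.get j

def IsShift {A : Type*} (ω' ω : ℤ → A) : Prop :=
  ∃ c : ℤ, ω' = fun i => ω (i + c)

def IsLeastPeriod {A : Type*} (ω : ℤ → A) (n : ℕ) : Prop :=
  0 < n ∧ (∀ i, ω (i + n) = ω i) ∧
    ∀ m : ℕ, 0 < m → (∀ i, ω (i + m) = ω i) → n ≤ m

def Defines {A : Type*} (S : Set (List A)) (ω : ℤ → A) : Prop :=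
  (∀ s ∈ S, ¬ IsFactorL ω s) ∧
  ∀ ω' : ℤ → A, (∀ s ∈ S, ¬ IsFactorL ω' s) → IsShift ω' ω

theorem Function.Periodic.eq_of_eqOn_Ico {A : Type*} {f g : ℤ → A} {n : ℤ}
    (hf : Function.Periodic f n) (hg : Function.Periodic g n) (hn : 0 < n)
    (h : ∀ j, 0 ≤ j → j < n → f j = g j) : f = g := by
  funext x
  have hf' := hf.int_mul (x / n) (x % n)
  have hg' := hg.int_mul (x / n) (x % n)
  rw [Int.cast_id, Int.emod_add_ediv_mul] at hf' hg'
  rw [hf', hg']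
  exact h _ (Int.emod_nonneg x hn.ne') (Int.emod_lt_of_pos x hn)

theorem isFactorL_ofFn_iff {A : Type*} (ω : ℤ → A) {m : ℕ} (u : Fin m → A) :
    IsFactorL ω (List.ofFn u) ↔ ∃ i : ℤ, ∀ j : Fin m, ω (i + j) = u j := by
  simp only [IsFactorL, List.get_ofFn]
  exact exists_congr fun i => (Fin.castOrderIso (List.length_ofFn (f := u))).forall_congr_left

theorem isFactorL_ofFn_window {A : Type*} (ω : ℤ → A) (m : ℕ) (t : ℤ) :
    IsFactorL ω (List.ofFn fun j : Fin m => ω (t + j)) :=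
  (isFactorL_ofFn_iff ω _).2 ⟨t, fun _ => rfl⟩

theorem isShift_of_windows_isFactorL {A : Type*} {ω ω' : ℤ → A} {n : ℕ} (hn : 0 < n)
    (hω : Function.Periodic ω n)
    (hwin : ∀ t : ℤ, IsFactorL ω (List.ofFn fun j : Fin (n + 1) => ω' (t + j))) :
    IsShift ω' ω := by
  have hwin' : ∀ t, ∃ k : ℤ, ∀ j : Fin (n + 1), ω (k + j) = ω' (t + j) :=
    fun t => (isFactorL_ofFn_iff ω _).1 (hwin t)
  have hω' : Function.Periodic ω' n := by
    intro t
    obtain ⟨k, hk⟩ := hwin' t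
    calc ω' (t + n) = ω (k + n) := (hk (Fin.last n)).symm
      _ = ω k := hω k
      _ = ω' t := by simpa using hk 0
  obtain ⟨k, hk⟩ := hwin' 0
  refine ⟨k, hω'.eq_of_eqOn_Ico (hω.add_const k) (by exact_mod_cast hn) fun j hj0 hjn => ?_⟩
  lift j to ℕ using hj0
  simpa [add_comm] using (hk ⟨j, by omega⟩).symm

theorem stmt0_general {A : Type*} (ω : ℤ → A) (n : ℕ)
    (hn : IsLeastPeriod ω n) :
    Defines {u : List A | u.length ≤ n + 1 ∧ ¬ IsFactorL ω u} ω := by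
  obtain ⟨hnpos, hper, -⟩ := hn
  refine ⟨fun s hs => hs.2, fun ω' havoid => isShift_of_windows_isFactorL hnpos hper fun t => ?_⟩
  by_contra hnot
  exact havoid _ ⟨by simp, hnot⟩ (isFactorL_ofFn_window ω' _ t)

theorem stmt0 {A : Type*} [Fintype A] (ω : ℤ → A) (n : ℕ)
    (hn : IsLeastPeriod ω n) :
    Defines {u : List A | u.length ≤ n + 1 ∧ ¬ IsFactorL ω u} ω :=
  stmt0_general ω n hn
end

section
/- Let ω : ℤ → A be a bi-infinite word over a finite alphabet and let S be a reduced forbidding system defining ω (S defines ω and every proper factor of every word in S is a factor of ω). Let u and v be factors of ω of length k+1 such that the length-k suffix of u equals the length-k prefix of v, and suppose the length-(k+2) word w obtained by overlapping u and v along this common part is not a factor of ω. Then w ∈ S. -/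
/-- `S` is a reduced forbidding system for `ω`. -/
def Reduced {A : Type*} (S : Set (List A)) (ω : ℤ → A) : Prop :=
  (∀ s ∈ S, ¬ IsFactorL ω s) ∧
  ∀ s ∈ S, ∀ t : List A, t <:+: s → t ≠ s → IsFactorL ω t


/-!
Suppose `w ∉ S`, and let `u` occur in `ω` at `i` and `v` at `j`. Follow `ω` up to the end of this
occurrence of `u`, then continue as `ω` does after the occurrence of `v`. Since `u` and `v` overlap
as in `w`, the resulting word `ω'` agrees with a shift of `ω` from position `i + 1` on, and `w`
occurs in `ω'` at `i`. A word of `S` occurring in `ω'` either lies left of the junction or right of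
`i`, and is then a factor of `ω`, or it contains `w`, properly since `w ∉ S`, and then `w` is a
factor of `ω` because `S` is reduced. So `ω'` avoids `S`, hence is a shift of `ω`, and `w` is a
factor of `ω` after all.
-/

section Occurrences

variable {A : Type*}

def OccursAt (ω : ℤ → A) (i : ℤ) (u : List A) : Prop :=
  ∀ a (h : a < u.length), ω (i + a) = u[a]

theorem isFactorL_iff_exists_occursAt {ω : ℤ → A} {u : List A} :
    IsFactorL ω u ↔ ∃ i, OccursAt ω i u := by
  simp only [IsFactorL, OccursAt, Fin.forall_iff, List.get_eq_getElem]

theorem OccursAt.of_shift {ω ω' : ℤ → A} {p c : ℤ} {s : List A} (hs : OccursAt ω' p s)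
    (hshift : ∀ a < s.length, ω' (p + a) = ω (p + a + c)) : OccursAt ω (p + c) s := by
  intro a ha
  rw [← hs a ha, hshift a ha, add_right_comm]

theorem IsShift.isFactorL {ω ω' : ℤ → A} {u : List A} (hshift : IsShift ω' ω)
    (hu : IsFactorL ω' u) : IsFactorL ω u := by
  obtain ⟨c, rfl⟩ := hshift
  obtain ⟨p, hp⟩ := isFactorL_iff_exists_occursAt.1 hu
  exact isFactorL_iff_exists_occursAt.2 ⟨p + c, hp.of_shift fun _ _ => rfl⟩

theorem OccursAt.infix_of_le {ω : ℤ → A} {p i : ℤ} {s w : List A} (hs : OccursAt ω p s)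
    (hw : OccursAt ω i w) (hpi : p ≤ i) (hend : i + w.length ≤ p + s.length) : w <:+: s := by
  obtain ⟨d, rfl⟩ : ∃ d : ℕ, i = p + d := ⟨(i - p).toNat, by omega⟩
  have hws : w = (s.drop d).take w.length := by
    refine List.ext_getElem (by simp; omega) fun a ha _ => ?_
    rw [List.getElem_take, List.getElem_drop, ← hw a ha, ← hs (d + a) (by omega), Nat.cast_add,
      add_assoc]
  rw [hws]
  exact (List.take_prefix _ _).isInfix.trans (List.drop_suffix _ _).isInfix

theorem OccursAt.isFactorL_or_infix {ω ω' : ℤ → A} {m c i p : ℤ} {s w : List A}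
    (hs : OccursAt ω' p s) (hw : OccursAt ω' i w)
    (hleft : ∀ n < m, ω' n = ω n) (hright : ∀ n, i < n → ω' n = ω (n + c))
    (hm : i + w.length ≤ m + 1) : IsFactorL ω s ∨ w <:+: s := by
  rcases le_or_gt (p + s.length) m with hpm | hmp
  · refine .inl (isFactorL_iff_exists_occursAt.2 ⟨p + 0, hs.of_shift fun a ha => ?_⟩)
    rw [add_zero]
    exact hleft _ (by omega)
  rcases lt_or_ge i p with hip | hpi
  · exact .inl (isFactorL_iff_exists_occursAt.2 ⟨p + c, hs.of_shift fun a _ => hright _ (by omega)⟩)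
  · exact .inr (hs.infix_of_le hw hpi (by omega))

def splice (ω : ℤ → A) (m c : ℤ) : ℤ → A := fun n => if n < m then ω n else ω (n + c)

section Splice

variable {ω : ℤ → A} {i j : ℤ} {w : List A}

theorem splice_of_lt {m c n : ℤ} (h : n < m) : splice ω m c n = ω n := if_pos h

theorem splice_of_le {m c n : ℤ} (h : m ≤ n) : splice ω m c n = ω (n + c) := if_neg (by omega)

theorem splice_eq_shift_of_overlap (hi : OccursAt ω i w.dropLast) (hj : OccursAt ω j w.tail)
    {n : ℤ} (hn : i < n) : splice ω (i + w.length - 1) (j - i - 1) n = ω (n + (j - i - 1)) := by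
  rcases lt_or_ge n (i + w.length - 1) with hlt | hge
  · rw [splice_of_lt hlt]
    obtain ⟨a, rfl⟩ : ∃ a : ℕ, n = i + (a + 1 : ℕ) := ⟨(n - i - 1).toNat, by omega⟩
    have ha : a + 1 < w.dropLast.length := by simp; omega
    have hshift : i + (a + 1 : ℕ) + (j - i - 1) = j + a := by push_cast; ring
    rw [hshift, hi _ ha, hj a (by simp at ha ⊢; omega), List.getElem_dropLast, List.getElem_tail]
  · exact splice_of_le hge

theorem occursAt_splice (hi : OccursAt ω i w.dropLast) (hj : OccursAt ω j w.tail)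
    (hw : 2 ≤ w.length) : OccursAt (splice ω (i + w.length - 1) (j - i - 1)) i w := by
  intro a ha
  rcases lt_or_ge (a + 1) w.length with hlt | hge
  · rw [splice_of_lt (by omega), hi a (by simpa using by omega), List.getElem_dropLast]
  · have hlast : a = (w.length - 2) + 1 := by omega
    have hshift : i + a + (j - i - 1) = j + (w.length - 2 : ℕ) := by push_cast [hlast]; omega
    rw [splice_of_le (by omega), hshift, hj _ (by simp; omega), List.getElem_tail]
    simp only [← hlast]

end Splice

end Occurrences

theorem stmt7_general {A : Type*} (ω : ℤ → A) (S : Set (List A))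
    (hdef : Defines S ω) (hred : Reduced S ω)
    (k : ℕ) (u v w : List A)
    (hw : w.length = k + 2)
    (hfu : IsFactorL ω u) (hfv : IsFactorL ω v)
    (hwu : w.take (k + 1) = u) (hwv : w.drop 1 = v)
    (hnf : ¬ IsFactorL ω w) :
    w ∈ S := by
  by_contra hwS
  obtain ⟨i, hi⟩ := isFactorL_iff_exists_occursAt.1 hfu
  obtain ⟨j, hj⟩ := isFactorL_iff_exists_occursAt.1 hfv
  rw [← hwu, show k + 1 = w.length - 1 by omega, ← List.dropLast_eq_take] at hi
  rw [← hwv, List.drop_one] at hj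
  set ω' := splice ω (i + w.length - 1) (j - i - 1)
  have hwω' : OccursAt ω' i w := occursAt_splice hi hj (by omega)
  have havoid : ∀ s ∈ S, ¬ IsFactorL ω' s := by
    intro s hs hfs
    obtain ⟨p, hp⟩ := isFactorL_iff_exists_occursAt.1 hfs
    rcases hp.isFactorL_or_infix hwω' (fun _ => splice_of_lt)
      (fun _ => splice_eq_shift_of_overlap hi hj) (by omega) with hfs | hinf
    · exact hdef.1 s hs hfs
    · exact hnf (hred.2 s hs w hinf fun h => hwS (h ▸ hs))
  exact hnf ((hdef.2 ω' havoid).isFactorL (isFactorL_iff_exists_occursAt.2 ⟨i, hwω'⟩))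

theorem stmt7 {A : Type*} [Fintype A] (ω : ℤ → A) (S : Set (List A))
    (hdef : Defines S ω) (hred : Reduced S ω)
    (k : ℕ) (u v w : List A)
    (hu : u.length = k + 1) (hv : v.length = k + 1) (hw : w.length = k + 2)
    (hfu : IsFactorL ω u) (hfv : IsFactorL ω v)
    (hwu : w.take (k + 1) = u) (hwv : w.drop 1 = v)
    (hnf : ¬ IsFactorL ω w) :
    w ∈ S :=
  stmt7_general ω S hdef hred k u v w hw hfu hfv hwu hwv hnf
end

section
/- Let ω : ℤ → A be periodic with least period n ≥ 2 over alphabet A. Then the reduced forbidding system defining ω is unique, and it equals the set of minimal non-factors of ω, i.e. the words w such that w is not a factor of ω but every proper factor of w is a factor of ω. -/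
lemma reduced_defines_eq {A : Type*} (ω : ℤ → A) (S : Set (List A))
    (h : Defines S ω) (hr : Reduced S ω) :
    S = {w : List A | ¬ IsFactorL ω w ∧
          ∀ t : List A, t <:+: w → t ≠ w → IsFactorL ω t} := by
  ext w
  simp only [Set.mem_setOf_eq]
  constructor
  · intro hw
    exact ⟨h.1 w hw, hr.2 w hw⟩
  · rintro ⟨hwnf, hwmin⟩
    by_contra hwS
    have hne : w ≠ [] := by
      rintro rfl
      exact hwnf ⟨0, fun j => j.elim0⟩
    have hlen : 1 ≤ w.length := List.length_pos_iff.mpr hne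
    obtain ⟨i, hi⟩ := hwmin w.dropLast (List.dropLast_prefix w).isInfix
      (by intro hh; have := congrArg List.length hh
          simp only [List.length_dropLast] at this; omega)
    obtain ⟨i', hi'⟩ := hwmin w.tail (List.tail_suffix w).isInfix
      (by intro hh; have := congrArg List.length hh
          simp only [List.length_tail] at this; omega)
    have hp : ∀ j : ℕ, j < w.length - 1 → ω (i + j) = w.getD j (ω 0) := by
      intro j hj
      have hj' : j < w.dropLast.length := by simp [List.length_dropLast]; omega
      have h0 := hi ⟨j, hj'⟩
      simp only [List.get_eq_getElem, List.getElem_dropLast] at h0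
      rw [List.getD_eq_getElem _ _ (by omega)]
      exact h0
    have hq : ∀ j : ℕ, j < w.length - 1 → ω (i' + j) = w.getD (j + 1) (ω 0) := by
      intro j hj
      have hj' : j < w.tail.length := by simp [List.length_tail]; omega
      have h0 := hi' ⟨j, hj'⟩
      simp only [List.get_eq_getElem, List.getElem_tail] at h0
      rw [List.getD_eq_getElem _ _ (by omega)]
      exact h0
    set ω' : ℤ → A := fun k =>
      if k < i then ω k
      else if k < i + w.length then w.getD (k - i).toNat (ω 0)
      else ω (i' + (k - i - 1)) with hω'
    have fact_left : ∀ k : ℤ, k < i + w.length - 1 → ω' k = ω k := by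
      intro k hk
      simp only [hω']
      split_ifs with h1 h2
      · rfl
      · have h0 := hp (k - i).toNat (by omega)
        rw [← h0]
        congr 1
        omega
      · omega
    have fact_right : ∀ k : ℤ, i < k → ω' k = ω (i' + (k - i - 1)) := by
      intro k hk
      simp only [hω']
      split_ifs with h1 h2
      · omega
      · have h0 := hq (k - i - 1).toNat (by omega)
        rw [show (k - i).toNat = (k - i - 1).toNat + 1 by omega, ← h0]
        congr 1
        omega
      · rfl
    have fact_mid : ∀ j : ℕ, j < w.length → ω' (i + j) = w.getD j (ω 0) := by
      intro j hj
      simp only [hω']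
      split_ifs with h1 h2
      · omega
      · congr 1
        omega
      · omega
    have havoid : ∀ s ∈ S, ¬ IsFactorL ω' s := by
      rintro s hs ⟨a, ha⟩
      by_cases h1 : a + s.length ≤ i + w.length - 1
      · apply h.1 s hs
        refine ⟨a, fun j => ?_⟩
        rw [← fact_left (a + j) (by have := j.2; omega)]
        exact ha j
      · by_cases h2 : i + 1 ≤ a
        · apply h.1 s hs
          refine ⟨a + (i' - i - 1), fun j => ?_⟩
          have h0 := fact_right (a + j) (by have : (0:ℤ) ≤ (j:ℤ) := Int.natCast_nonneg _; omega)
          rw [show a + (i' - i - 1) + (j:ℤ) = i' + (a + (j:ℤ) - i - 1) by ring, ← h0]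
          exact ha j
        · push_neg at h1 h2
          have hd : (i - a).toNat + w.length ≤ s.length := by omega
          set d := (i - a).toNat with hdd
          have hw_eq : w = (s.drop d).take w.length := by
            apply List.ext_getElem
            · simp only [List.length_take, List.length_drop]
              omega
            · intro j hj1 hj2
              rw [List.getElem_take, List.getElem_drop]
              have h3 := ha ⟨d + j, by omega⟩
              simp only [List.get_eq_getElem] at h3
              have h4 := fact_mid j hj1
              rw [List.getD_eq_getElem _ _ hj1] at h4
              rw [← h3, ← h4]
              congr 1
              push_cast
              omega
          have hinf : w <:+: s :=
            hw_eq ▸ ((List.take_prefix _ _).isInfix.trans (List.drop_suffix _ _).isInfix)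
          by_cases hws : w = s
          · exact hwS (hws ▸ hs)
          · exact hwnf (hr.2 s hs w hinf hws)
    obtain ⟨c, hc⟩ := h.2 ω' havoid
    apply hwnf
    refine ⟨i + c, fun j => ?_⟩
    have h4 := fact_mid j j.2
    rw [List.getD_eq_getElem _ _ j.2] at h4
    simp only [hc] at h4
    simp only [List.get_eq_getElem]
    rw [show i + c + (j:ℤ) = i + (j:ℤ) + c by ring]
    exact h4

theorem stmt11 {A : Type*} [Fintype A] (ω : ℤ → A) (n : ℕ) (hn : 2 ≤ n)
    (hper : IsLeastPeriod ω n)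
    (S₁ S₂ : Set (List A))
    (h₁ : Defines S₁ ω) (hr₁ : Reduced S₁ ω)
    (h₂ : Defines S₂ ω) (hr₂ : Reduced S₂ ω) :
    S₁ = S₂ ∧
    S₁ = {w : List A | ¬ IsFactorL ω w ∧
          ∀ t : List A, t <:+: w → t ≠ w → IsFactorL ω t} := by
  have e1 := reduced_defines_eq ω S₁ h₁ hr₁
  have e2 := reduced_defines_eq ω S₂ h₂ hr₂
  exact ⟨e1.trans e2.symm, e1⟩
end

section
/- Let ω : ℤ → A be periodic with least period n, and let S be a reduced forbidding system defining ω. Then every word in S has length at most n+1, and hence S is finite with |S| ≤ |A|^{n+1}·(n+1). -/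
/-! A forbidden word `s ∈ S` of length at least `n + 2` would have all its factors of
length `n + 1` in `ω`, since they are proper. For an `n`-periodic `ω` this forces `s` itself
to be `n`-periodic as a list, with its first `n` letters read off `ω` at some position, so `s`
would be a factor of `ω`. Hence every forbidden word has length at most `n + 1`; the count
follows by encoding a nonempty word of length at most `n + 1` by its length and its padding
to length `n + 1`. -/

open Function

section Factors

variable {A : Type*} {ω : ℤ → A} {n : ℕ}

theorem isFactorL_nil (ω : ℤ → A) : IsFactorL ω [] :=
  ⟨0, fun j => j.elim0⟩

theorem getElem_add_eq_of_forall_infix (hp : Periodic ω n) {u : List A}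
    (hu : ∀ t, t <:+: u → t.length ≤ n + 1 → IsFactorL ω t) {k : ℕ} (hk : k + n < u.length) :
    u[k + n] = u[k] := by
  set t := (u.drop k).take (n + 1) with ht
  have htu : t <:+: u := (List.take_prefix _ _).isInfix.trans (List.drop_suffix k u).isInfix
  obtain ⟨m, hm⟩ := hu t htu (List.length_take_le _ _)
  have hlast := hm ⟨n, by simp only [ht, List.length_take, List.length_drop]; omega⟩
  have hfirst := hm ⟨0, by simp only [ht, List.length_take, List.length_drop]; omega⟩
  simp only [ht, List.get_eq_getElem, List.getElem_take, List.getElem_drop] at hlast hfirst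
  rw [← hlast, hp m]
  simpa using hfirst

theorem getElem_add_mul_eq_of_forall_infix (hp : Periodic ω n) {u : List A}
    (hu : ∀ t, t <:+: u → t.length ≤ n + 1 → IsFactorL ω t) (r : ℕ) :
    ∀ q (hq : r + n * q < u.length), u[r + n * q] = u[r] := by
  intro q
  induction q with
  | zero => simp
  | succ q ih =>
    intro hq
    have hstep :=
      getElem_add_eq_of_forall_infix hp hu (k := r + n * q) (by rw [mul_add] at hq; omega)
    simp only [mul_add, mul_one, ← add_assoc] at hq ⊢
    rw [hstep, ih]

theorem isFactorL_of_forall_infix (hn : 0 < n) (hp : Periodic ω n) {u : List A}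
    (hu : ∀ t, t <:+: u → t.length ≤ n + 1 → IsFactorL ω t) : IsFactorL ω u := by
  obtain ⟨i, hi⟩ := hu (u.take n) (List.take_prefix n u).isInfix
    (by simp only [List.length_take]; omega)
  refine ⟨i, fun ⟨k, hk⟩ => ?_⟩
  have hdiv := Nat.mod_add_div k n
  have hω : ω (i + k) = ω (i + (k % n : ℕ)) := by
    have hsplit : (i + k : ℤ) = i + (k % n : ℕ) + ((k / n : ℕ) * n : ℤ) := by
      have h := Nat.mod_add_div' k n
      zify at h
      push_cast
      linarith
    rw [hsplit, hp.nat_mul]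
  have hu' : u[k] = u[k % n] := by
    rw [← getElem_add_mul_eq_of_forall_infix hp hu (k % n) (k / n) (by omega)]
    simp only [hdiv]
  have hprefix := hi ⟨k % n, by simp only [List.length_take]; have := Nat.mod_lt k hn; omega⟩
  simp only [List.get_eq_getElem, List.getElem_take] at hprefix ⊢
  rw [hω, hprefix, hu']

theorem Reduced.length_le (hn : 0 < n) (hp : Periodic ω n) {S : Set (List A)}
    (hred : Reduced S ω) {s : List A} (hs : s ∈ S) : s.length ≤ n + 1 := by
  by_contra! hlong
  refine hred.1 s hs (isFactorL_of_forall_infix hn hp fun t hts htlen => ?_)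
  exact hred.2 s hs t hts (by rintro rfl; omega)

end Factors

theorem Set.finite_and_ncard_le_of_length_le {A : Type*} [Fintype A] {S : Set (List A)}
    {m : ℕ} (hnil : [] ∉ S) (hlen : ∀ l ∈ S, l.length ≤ m + 1) :
    S.Finite ∧ S.ncard ≤ Fintype.card A ^ (m + 1) * (m + 1) := by
  rcases S.eq_empty_or_nonempty with rfl | ⟨l₀, hl₀⟩
  · simp
  obtain ⟨a, -⟩ := List.exists_mem_of_ne_nil l₀ fun h => hnil (h ▸ hl₀)
  let encode : List A → Fin (m + 1) × (Fin (m + 1) → A) := fun l =>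
    (⟨min (l.length - 1) m, Nat.lt_succ_of_le (min_le_right _ _)⟩, fun i => l.getD i a)
  have hinj : S.InjOn encode := by
    intro s hs t ht hst
    simp only [encode, Prod.mk.injEq, Fin.mk.injEq] at hst
    have hs₀ : s ≠ [] := fun h => hnil (h ▸ hs)
    have ht₀ : t ≠ [] := fun h => hnil (h ▸ ht)
    have hlength : s.length = t.length := by
      have := List.length_pos_iff.mpr hs₀
      have := List.length_pos_iff.mpr ht₀
      have := hlen s hs; have := hlen t ht
      omega
    refine List.ext_getElem hlength fun i his hit => ?_
    simpa [List.getD_eq_getElem, his, hit] using congrFun hst.2 ⟨i, by linarith [hlen s hs]⟩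
  refine ⟨Set.Finite.of_injOn (Set.mapsTo_univ _ _) hinj Set.finite_univ, ?_⟩
  calc S.ncard ≤ (Set.univ : Set (Fin (m + 1) × (Fin (m + 1) → A))).ncard :=
        Set.ncard_le_ncard_of_injOn encode (fun _ _ => Set.mem_univ _) hinj
    _ = Fintype.card A ^ (m + 1) * (m + 1) := by
        rw [Set.ncard_univ, Nat.card_eq_fintype_card, Fintype.card_prod, Fintype.card_fun,
          Fintype.card_fin, mul_comm]

theorem stmt14_general {A : Type*} [Fintype A] (ω : ℤ → A) (n : ℕ)
    (hper : IsLeastPeriod ω n) (S : Set (List A))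
    (hred : Reduced S ω) :
    (∀ s ∈ S, s.length ≤ n + 1) ∧ S.Finite ∧
      S.ncard ≤ (Fintype.card A) ^ (n + 1) * (n + 1) := by
  obtain ⟨hn, hp, -⟩ := hper
  have hlen : ∀ s ∈ S, s.length ≤ n + 1 := fun s hs => hred.length_le hn hp hs
  have hnil : [] ∉ S := fun h => hred.1 [] h (isFactorL_nil ω)
  exact ⟨hlen, Set.finite_and_ncard_le_of_length_le hnil hlen⟩

theorem stmt14 {A : Type*} [Fintype A] (ω : ℤ → A) (n : ℕ)
    (hper : IsLeastPeriod ω n) (S : Set (List A))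
    (hdef : Defines S ω) (hred : Reduced S ω) :
    (∀ s ∈ S, s.length ≤ n + 1) ∧ S.Finite ∧
      S.ncard ≤ (Fintype.card A) ^ (n + 1) * (n + 1) :=
  stmt14_general ω n hper S hred
end

section
/- Let ω : ℤ → A be periodic with least period n. If u is a word of length k ≥ n such that every factor of u of length n is a factor of ω, then u is a factor of ω. -/
namespace Function.Periodic

variable {α : Type*} {f : ℤ → α} {n : ℕ}

lemma apply_eq_of_dvd_sub (hf : Periodic f n) {x y : ℤ} (h : (n : ℤ) ∣ y - x) : f y = f x := by
  obtain ⟨c, hc⟩ := h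
  rw [show y = x + c * n by linarith]
  exact hf.int_mul c x

lemma apply_add_eq_of_forall_not_dvd (hf : Periodic f n) (hn : 0 < n) {p d : ℤ}
    (h : ∀ x, ¬ (n : ℤ) ∣ x - p → f (x + d) = f x) : f (p + d) = f p := by
  have orbit : ∀ k : ℕ, 1 ≤ k → f (p + k * d) = f (p + d) ∨ f (p + d) = f p := by
    intro k hk
    induction k, hk using Nat.le_induction with
    | base => simp
    | succ k _ ih =>
      refine ih.elim (fun ih => ?_) Or.inr
      by_cases hdvd : (n : ℤ) ∣ k * d
      · exact Or.inr (ih ▸ hf.apply_eq_of_dvd_sub (by simpa using hdvd))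
      · refine Or.inl ?_
        rw [← ih, show p + ((k + 1 : ℕ) : ℤ) * d = p + k * d + d by push_cast; ring]
        exact h _ (by simpa using hdvd)
  rcases orbit n hn with h | h
  · rw [← h]
    exact hf.apply_eq_of_dvd_sub ⟨d, by ring⟩
  · exact h

lemma of_window (hf : Periodic f n) (hn : 0 < n) {a d : ℤ}
    (h : ∀ s : ℕ, s + 1 < n → f (a + s + d) = f (a + s)) : Periodic f d := by
  set p := a + (n - 1)
  have off_class : ∀ x, ¬ (n : ℤ) ∣ x - p → f (x + d) = f x := by
    intro x hx
    obtain ⟨s, hs⟩ : ∃ s : ℕ, (s : ℤ) = (x - a) % n :=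
      ⟨((x - a) % n).toNat, Int.toNat_of_nonneg (Int.emod_nonneg _ (by omega))⟩
    have hsn : (s : ℤ) < n := hs ▸ Int.emod_lt_of_pos _ (by omega)
    have hdvd : (n : ℤ) ∣ x - (a + s) := by
      rw [show x - (a + s) = x - a - (x - a) % n by omega]
      exact Int.dvd_self_sub_emod
    have hs1 : s + 1 < n := by
      by_contra hge
      exact hx (by rwa [show x - p = x - (a + s) by omega])
    rw [hf.apply_eq_of_dvd_sub (x := a + s + d) (by simpa using hdvd),
      hf.apply_eq_of_dvd_sub (y := x) hdvd]
    exact h s hs1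
  intro x
  by_cases hx : (n : ℤ) ∣ x - p
  · rw [hf.apply_eq_of_dvd_sub (x := p + d) (by simpa using hx), hf.apply_eq_of_dvd_sub hx]
    exact hf.apply_add_eq_of_forall_not_dvd hn off_class
  · exact off_class x hx

end Function.Periodic

lemma isFactorL_iff {A : Type*} {ω : ℤ → A} {u : List A} :
    IsFactorL ω u ↔ ∃ i : ℤ, ∀ m (hm : m < u.length), ω (i + m) = u[m] :=
  exists_congr fun _ => Fin.forall_iff

lemma exists_window_of_forall_infix {A : Type*} {ω : ℤ → A} {n : ℕ} {u : List A}
    (hfac : ∀ t : List A, t <:+: u → t.length = n → IsFactorL ω t) {k : ℕ}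
    (hk : k + n ≤ u.length) : ∃ j : ℤ, ∀ t (ht : t < n), ω (j + t) = u[k + t] := by
  have hinfix : (u.drop k).take n <:+: u :=
    (List.take_prefix _ _).isInfix.trans (List.drop_suffix _ _).isInfix
  obtain ⟨j, hj⟩ := isFactorL_iff.1 (hfac _ hinfix (by simp; omega))
  exact ⟨j, fun t ht => (hj t (by simp; omega)).trans (by simp)⟩

theorem stmt15 {A : Type*} (ω : ℤ → A) (n : ℕ) (hper : IsLeastPeriod ω n)
    (u : List A) (hlen : n ≤ u.length)
    (hfac : ∀ t : List A, t <:+: u → t.length = n → IsFactorL ω t) :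
    IsFactorL ω u := by
  obtain ⟨hn, hω, -⟩ := hper
  obtain ⟨i, hi⟩ := exists_window_of_forall_infix hfac (k := 0) (by omega)
  refine isFactorL_iff.2 ⟨i, fun m => ?_⟩
  induction m using Nat.strong_induction_on with | _ m ih => ?_
  intro hm
  by_cases hmn : m < n
  · simpa using hi m hmn
  obtain ⟨j, hj⟩ := exists_window_of_forall_infix hfac (k := m + 1 - n) (by omega)
  have hshift : Function.Periodic ω (i + (m + 1 - n : ℕ) - j) := by
    refine Function.Periodic.of_window hω hn (a := j) fun s hs => ?_
    rw [hj s (by omega), show j + s + (i + (m + 1 - n : ℕ) - j) = i + (m + 1 - n + s : ℕ) by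
      push_cast; ring]
    exact ih _ (by omega) _
  calc ω (i + m) = ω (j + (n - 1 : ℕ) + (i + (m + 1 - n : ℕ) - j)) := by congr 1; omega
    _ = u[m] := by rw [hshift, hj _ (by omega)]; congr 1; omega
end
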